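/- Let Y be a smooth rational normal scroll S(a₁,…,a_{n+1}) ⊂ P^{n+c} and X a nondegenerate effective divisor on Y of class aH + bF with a ≥ 0 and either (a = 0, b ≥ 1 + a_{n+1}) or (a = 1, b ≥ 1) or (a ≥ 2, b ≥ −a·a_{n+1}). Then a₂(X) = a₂(Y) implies the base locus of |I_X(2)| equals Y, i.e., Q(X) = Y; and conversely Q(X) = Y implies a₂(X) = a₂(Y). -/
import Mathlib


/-!
Common framework: a projective variety `X ⊆ ℙ^N` over a field `k` is represented by its
affine cone `C ⊆ (ι → k)` (with `ι` the index type of homogeneous coordinates,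
`Fintype.card ι = N + 1`).  All projective notions (vanishing ideal, `a₂`, Hilbert
function, dimension, degree, depth, base locus of quadrics, irreducible components,
scrolls and divisors on them, sectional genus, maximal sectional regularity) are
defined concretely below.
-/

open MvPolynomial

noncomputable section

namespace PaperQuadrics

variable (k : Type) [Field k] (ι : Type) [Fintype ι] [DecidableEq ι]

/-- The vanishing ideal of a subset `C` of the affine cone `ι → k`. -/
def vanIdeal (C : Set (ι → k)) : Ideal (MvPolynomial ι k) :=
  ⨅ x ∈ C, RingHom.ker (MvPolynomial.eval x)

/-- The degree-`m` graded piece of an ideal of the polynomial ring. -/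
def idealPiece (I : Ideal (MvPolynomial ι k)) (m : ℕ) : Submodule k (MvPolynomial ι k) :=
  Submodule.restrictScalars k I ⊓ homogeneousSubmodule ι k m

/-- The space of quadrics vanishing on `C`, i.e. `H⁰(ℙ^N, I_C(2))`. -/
def quadrics (C : Set (ι → k)) : Submodule k (MvPolynomial ι k) :=
  idealPiece k ι (vanIdeal k ι C) 2

/-- `a₂(C) = h⁰(ℙ^N, I_C(2))`, the number of linearly independent quadrics through `C`. -/
def a2 (C : Set (ι → k)) : ℕ := Module.finrank k (quadrics k ι C)

/-- The Hilbert function of `R/I` in degree `m`. -/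
def idealHilb (I : Ideal (MvPolynomial ι k)) (m : ℕ) : ℕ :=
  Module.finrank k (homogeneousSubmodule ι k m) - Module.finrank k (idealPiece k ι I m)

/-- The Hilbert function of the homogeneous coordinate ring of `C`. -/
def hilb (C : Set (ι → k)) (m : ℕ) : ℕ := idealHilb k ι (vanIdeal k ι C) m

/-- `C ⊆ ι → k` is the affine cone of an irreducible projective variety:
it is a Zariski-closed cone whose vanishing ideal is prime. -/
structure IsProjVariety (C : Set (ι → k)) : Prop where
  zero_mem : (0 : ι → k) ∈ C
  smul_mem : ∀ x ∈ C, ∀ t : k, t • x ∈ C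
  closed : C = {x | ∀ f ∈ vanIdeal k ι C, MvPolynomial.eval x f = 0}
  prime : (vanIdeal k ι C).IsPrime

/-- Nondegenerate: no nonzero linear form vanishes identically on `C`. -/
def Nondeg (C : Set (ι → k)) : Prop :=
  ∀ f ∈ homogeneousSubmodule ι k 1, (∀ x ∈ C, MvPolynomial.eval x f = 0) → f = 0

/-- The projective variety with cone `C` has dimension `n`
(so the affine cone has Krull dimension `n + 1`). -/
def HasDim (C : Set (ι → k)) (n : ℕ) : Prop :=
  ringKrullDim (MvPolynomial ι k ⧸ vanIdeal k ι C) = (n + 1 : ℕ)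

/-- `C` (of projective dimension `n`) has degree `d`:
the Hilbert function satisfies `hF(m) · n! / mⁿ → d`. -/
def HasDegree (C : Set (ι → k)) (n d : ℕ) : Prop :=
  Filter.Tendsto (fun m : ℕ => (hilb k ι C m : ℝ) * (Nat.factorial n : ℝ) / (m : ℝ) ^ n)
    Filter.atTop (nhds (d : ℝ))

/-- `Q(C)`: the common zero set (base locus) of all quadrics through `C`. -/
def quadZero (C : Set (ι → k)) : Set (ι → k) :=
  {x | ∀ f ∈ quadrics k ι C, MvPolynomial.eval x f = 0}

/-- `fs` is a regular sequence on `R/I`. -/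
def IsRegSeqOn (I : Ideal (MvPolynomial ι k)) (fs : List (MvPolynomial ι k)) : Prop :=
  (∀ i : Fin fs.length, ∀ g : MvPolynomial ι k,
      fs.get i * g ∈ I ⊔ Ideal.span {h | ∃ j : Fin fs.length, j < i ∧ fs.get j = h} →
      g ∈ I ⊔ Ideal.span {h | ∃ j : Fin fs.length, j < i ∧ fs.get j = h}) ∧
  I ⊔ Ideal.span {h | ∃ j : Fin fs.length, fs.get j = h} ≠ ⊤

/-- Arithmetic depth of the homogeneous coordinate ring of `C`: the supremum of lengths of
regular sequences of elements of the irrelevant maximal ideal. -/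
def arithDepth (C : Set (ι → k)) : ℕ :=
  sSup {l : ℕ | ∃ fs : List (MvPolynomial ι k), fs.length = l ∧
    (∀ f ∈ fs, MvPolynomial.coeff 0 f = 0) ∧ IsRegSeqOn k ι (vanIdeal k ι C) fs}

/-- `Z` is an irreducible Zariski-closed cone. -/
def IsIrredClosed (Z : Set (ι → k)) : Prop :=
  Z = {x | ∀ f ∈ vanIdeal k ι Z, MvPolynomial.eval x f = 0} ∧ (vanIdeal k ι Z).IsPrime

/-- `Z` is an irreducible component of `Q`: an irreducible closed subset of `Q`, maximal
among the irreducible closed subsets of `Q`. -/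
def IsComponentOf (Z Q : Set (ι → k)) : Prop :=
  IsIrredClosed k ι Z ∧ Z ⊆ Q ∧
    ∀ Z' : Set (ι → k), IsIrredClosed k ι Z' → Z ⊆ Z' → Z' ⊆ Q → Z' = Z

/-- `C` is smooth away from the cone vertex, of codimension `c`: at each nonzero point the
Jacobian of the vanishing ideal has rank `c` (valid criterion in characteristic `0`). -/
def IsSmoothOfCodim (C : Set (ι → k)) (c : ℕ) : Prop :=
  ∀ x ∈ C, x ≠ (0 : ι → k) →
    Module.finrank k (Submodule.span k
      {v : ι → k | ∃ f ∈ vanIdeal k ι C,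
        v = fun i => MvPolynomial.eval x (MvPolynomial.pderiv i f)}) = c

/-- The projective variety with affine cone `C` is a cone (in the projective sense):
there is a vertex point `[v]` such that `C` is stable under the join with `[v]`. -/
def IsConeVariety (C : Set (ι → k)) : Prop :=
  ∃ v ∈ C, v ≠ 0 ∧ ∀ x ∈ C, ∀ s t : k, s • x + t • v ∈ C

/-- `C` (an `n`-dimensional variety of degree `d`) has sectional genus `g`: a general linear
curve section (cut by `n - 1` general hyperplanes) has Hilbert polynomial `d·m + 1 - g`. -/
def SectionalGenus (n : ℕ) (C : Set (ι → k)) (d g : ℕ) : Prop :=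
  ∃ P : MvPolynomial (Fin (n - 1) × ι) k, P ≠ 0 ∧
    ∀ w : Fin (n - 1) → ι → k, MvPolynomial.eval (fun q => w q.1 q.2) P ≠ 0 →
      ∀ᶠ m in Filter.atTop,
        (hilb k ι (C ∩ {x | ∀ j, ∑ i, w j i * x i = 0}) m : ℤ) = d * m + 1 - g

/-- `C` (an `n`-dimensional variety of degree `c + 3`) is a variety of maximal sectional
regularity: there is an `n`-dimensional linear subspace `F(X) = ℙ(L)` such that
`X ∩ F(X)` is (scheme-theoretically) a hypersurface of degree `4` in `F(X) ≅ ℙⁿ`,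
detected by the Hilbert function of the ideal sum. -/
def IsVMSR (n : ℕ) (C : Set (ι → k)) : Prop :=
  ∃ L : Submodule k (ι → k), Module.finrank k L = n + 1 ∧
    ∀ᶠ m in Filter.atTop,
      idealHilb k ι (vanIdeal k ι C ⊔ vanIdeal k ι (L : Set (ι → k))) m =
        Nat.choose (m + n) n - Nat.choose (m - 4 + n) n

end PaperQuadrics

namespace PaperQuadrics

variable {k : Type} [Field k]

/-- The parametrization of the rational normal scroll `S(a₀, …, aₙ)` (so the scroll has
dimension `n + 1`): homogeneous coordinates are indexed by `(i, j)`, `0 ≤ j ≤ aᵢ`,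
and the point of parameters `(s : t) ∈ ℙ¹`, `λ` has coordinates `λᵢ sʲ t^{aᵢ - j}`. -/
def scrollParam (n : ℕ) (a : Fin (n + 1) → ℕ) (s t : k) (lam : Fin (n + 1) → k) :
    ((i : Fin (n + 1)) × Fin (a i + 1)) → k :=
  fun x => lam x.1 * s ^ (x.2 : ℕ) * t ^ (a x.1 - (x.2 : ℕ))

/-- The affine cone of the scroll `S(a₀, …, aₙ) ⊆ ℙ^{n+1+c-1}`, `c = Σ aᵢ`. -/
def scrollCone (n : ℕ) (a : Fin (n + 1) → ℕ) :
    Set (((i : Fin (n + 1)) × Fin (a i + 1)) → k) :=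
  {v | ∃ s t lam, v = scrollParam n a s t lam}

/-- Global sections of `O_Y(A·H + b·F)` on the scroll `Y = S(a₀, …, aₙ)`, realized as
bihomogeneous polynomials in `s, t` (the `ℙ¹`-coordinates) and `T₀, …, Tₙ` (the fiber
coordinates): each monomial has total `T`-degree `A` and `(s,t)`-degree `b + Σ mᵢ aᵢ`. -/
def sectionSpace (k : Type) [Field k] (n : ℕ) (a : Fin (n + 1) → ℕ) (A b : ℤ) :
    Submodule k (MvPolynomial (Fin 2 ⊕ Fin (n + 1)) k) where
  carrier := {F | ∀ m ∈ F.support,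
    ((∑ i, m (Sum.inr i) : ℕ) : ℤ) = A ∧
    ((m (Sum.inl 0) + m (Sum.inl 1) : ℕ) : ℤ)
      = b + ∑ i, (m (Sum.inr i) : ℤ) * (a i : ℤ)}
  add_mem' := by
    intro p q hp hq m hm
    rcases Finset.mem_union.mp (MvPolynomial.support_add hm) with h | h
    · exact hp m h
    · exact hq m h
  zero_mem' := by
    intro m hm
    simp at hm
  smul_mem' := by
    intro c p hp m hm
    exact hp m (MvPolynomial.support_smul hm)

/-- The affine cone of the effective divisor `X ≡ A·H + b·F` on the scroll cut out by a
section `F`: the points of the scroll whose parameters are zeros of `F`. -/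
def divisorCone (n : ℕ) (a : Fin (n + 1) → ℕ)
    (F : MvPolynomial (Fin 2 ⊕ Fin (n + 1)) k) :
    Set (((i : Fin (n + 1)) × Fin (a i + 1)) → k) :=
  {v | ∃ s t lam, v = scrollParam n a s t lam ∧
     MvPolynomial.eval (Sum.elim (fun j : Fin 2 => if j = 0 then s else t) lam) F = 0}

end PaperQuadrics

open PaperQuadrics

namespace PaperQuadrics

variable {k : Type} [Field k]

lemma mem_vanIdeal_iff' {ι : Type} [Fintype ι] [DecidableEq ι] (C : Set (ι → k))
    (f : MvPolynomial ι k) :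
    f ∈ vanIdeal k ι C ↔ ∀ x ∈ C, MvPolynomial.eval x f = 0 := by
  simp [vanIdeal, RingHom.mem_ker]

lemma mem_quadrics_iff' {ι : Type} [Fintype ι] [DecidableEq ι] (C : Set (ι → k))
    (f : MvPolynomial ι k) :
    f ∈ quadrics k ι C ↔ (∀ x ∈ C, MvPolynomial.eval x f = 0) ∧ f.IsHomogeneous 2 := by
  rw [quadrics, idealPiece, Submodule.mem_inf, Submodule.restrictScalars_mem,
    mem_vanIdeal_iff', MvPolynomial.mem_homogeneousSubmodule]

lemma quadrics_antitone' {ι : Type} [Fintype ι] [DecidableEq ι] {C D : Set (ι → k)}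
    (h : C ⊆ D) : quadrics k ι D ≤ quadrics k ι C := by
  intro f hf
  rw [mem_quadrics_iff'] at hf ⊢
  exact ⟨fun x hx => hf.1 x (h hx), hf.2⟩

instance quadrics_fd' {ι : Type} [Fintype ι] [DecidableEq ι] (C : Set (ι → k)) :
    FiniteDimensional k (quadrics k ι C) := by
  apply Submodule.finiteDimensional_of_le (S₂ := MvPolynomial.restrictTotalDegree ι k 2)
  intro f hf
  rw [MvPolynomial.mem_restrictTotalDegree]
  exact ((mem_quadrics_iff' C f).mp hf).2.totalDegree_le

lemma minor_mem_quadrics' (n : ℕ) (a : Fin (n + 1) → ℕ) (i i' : Fin (n + 1))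
    (j j' : ℕ) (hj : j < a i) (hj' : j' < a i') :
    (MvPolynomial.X ⟨i, ⟨j, by omega⟩⟩ * MvPolynomial.X ⟨i', ⟨j' + 1, by omega⟩⟩
      - MvPolynomial.X ⟨i, ⟨j + 1, by omega⟩⟩ * MvPolynomial.X ⟨i', ⟨j', by omega⟩⟩ :
      MvPolynomial ((i : Fin (n + 1)) × Fin (a i + 1)) k) ∈
      quadrics k ((i : Fin (n + 1)) × Fin (a i + 1)) (scrollCone n a) := by
  rw [mem_quadrics_iff']
  constructor
  · rintro x ⟨s, t, lam, rfl⟩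
    simp only [map_sub, map_mul, MvPolynomial.eval_X, scrollParam]
    have h1 : a i - j = (a i - (j + 1)) + 1 := by omega
    have h2 : a i' - j' = (a i' - (j' + 1)) + 1 := by omega
    rw [h1, h2, pow_succ, pow_succ]
    ring
  · have hX : ∀ p : (i : Fin (n + 1)) × Fin (a i + 1),
        (MvPolynomial.X p : MvPolynomial ((i : Fin (n + 1)) × Fin (a i + 1)) k).IsHomogeneous 1 :=
      fun p => MvPolynomial.isHomogeneous_X k p
    exact ((hX _).mul (hX _)).sub ((hX _).mul (hX _))

lemma quadZero_scroll' (n : ℕ) (a : Fin (n + 1) → ℕ) :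
    quadZero k ((i : Fin (n + 1)) × Fin (a i + 1)) (scrollCone n a) = scrollCone n a := by
  apply Set.Subset.antisymm
  · intro x hx
    have hrel : ∀ (i i' : Fin (n + 1)) (j j' : ℕ), ∀ (hj : j < a i) (hj' : j' < a i'),
        x ⟨i, ⟨j, by omega⟩⟩ * x ⟨i', ⟨j' + 1, by omega⟩⟩
          = x ⟨i, ⟨j + 1, by omega⟩⟩ * x ⟨i', ⟨j', by omega⟩⟩ := by
      intro i i' j j' hj hj'
      have h := hx _ (minor_mem_quadrics' n a i i' j j' hj hj')
      simpa [sub_eq_zero] using h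
    by_cases hu : ∃ i : Fin (n + 1), ∃ j : ℕ, ∃ hj : j < a i, x ⟨i, ⟨j, by omega⟩⟩ ≠ 0
    · obtain ⟨i0, j0, hj0, hx0⟩ := hu
      set α := x ⟨i0, ⟨j0 + 1, by omega⟩⟩ / x ⟨i0, ⟨j0, by omega⟩⟩ with hα
      have hstep : ∀ (i : Fin (n + 1)) (j : ℕ), ∀ (hj : j < a i),
          x ⟨i, ⟨j + 1, by omega⟩⟩ = α * x ⟨i, ⟨j, by omega⟩⟩ := by
        intro i j hj
        have h := hrel i0 i j0 j hj0 hj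
        rw [hα, div_mul_eq_mul_div, eq_div_iff hx0]
        linear_combination h
      have hform : ∀ (i : Fin (n + 1)) (j : ℕ), ∀ (hj : j < a i + 1),
          x ⟨i, ⟨j, hj⟩⟩ = x ⟨i, ⟨0, by omega⟩⟩ * α ^ j := by
        intro i j
        induction j with
        | zero => intro hj; simp
        | succ m ih =>
          intro hj
          have hm : m < a i := by omega
          rw [hstep i m hm, ih (by omega), pow_succ]
          ring
      refine ⟨α, 1, fun i => x ⟨i, ⟨0, by omega⟩⟩, ?_⟩
      funext p
      obtain ⟨i, j⟩ := p
      rw [scrollParam]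
      simp only [one_pow, mul_one]
      exact (hform i j j.isLt).trans (by ring)
    · push_neg at hu
      refine ⟨1, 0, fun i => x ⟨i, ⟨a i, by omega⟩⟩, ?_⟩
      funext p
      obtain ⟨i, j⟩ := p
      rw [scrollParam]
      simp only [one_pow, one_mul]
      by_cases hja : (j : ℕ) = a i
      · have : a i - (j : ℕ) = 0 := by omega
        rw [this, pow_zero, mul_one]
        have hjj : j = (⟨a i, by omega⟩ : Fin (a i + 1)) := by
          apply Fin.ext
          simpa using hja
        rw [hjj, mul_one]
      · have hlt : (j : ℕ) < a i := by omega
        have : a i - (j : ℕ) ≠ 0 := by omega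
        rw [zero_pow this, mul_zero]
        exact hu i j hlt
  · intro x hx f hf
    exact ((mem_quadrics_iff' _ f).mp hf).1 x hx

end PaperQuadrics

/-- Proposition 4.3.(1), `(i) ⟺ (ii)`. For a nondegenerate effective
divisor `X ≡ A·H + b·F` on the scroll `Y = S(a₀, …, aₙ)`:
the base locus `Q(X)` of the quadrics through `X` equals `Y` iff `a₂(X) = a₂(Y)`. -/
theorem stmt_8 {k : Type} [Field k] [IsAlgClosed k] [CharZero k]
    (n : ℕ) (a : Fin (n + 1) → ℕ) (hmono : Monotone a)
    (hpos : ∀ i : Fin (n + 1), n - 1 ≤ (i : ℕ) → 0 < a i)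
    (A b : ℤ) (hA : 0 ≤ A)
    (F : MvPolynomial (Fin 2 ⊕ Fin (n + 1)) k) (hF : F ≠ 0)
    (hFsec : F ∈ sectionSpace k n a A b)
    (hndg : (A = 0 ∧ 1 + (a (Fin.last n) : ℤ) ≤ b) ∨
      (A = 1 ∧ 1 ≤ b) ∨
      (2 ≤ A ∧ -(A * (a (Fin.last n) : ℤ)) ≤ b)) :
    (quadZero k ((i : Fin (n + 1)) × Fin (a i + 1)) (divisorCone n a F) =
        scrollCone n a) ↔
      a2 k ((i : Fin (n + 1)) × Fin (a i + 1)) (divisorCone n a F) =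
        a2 k ((i : Fin (n + 1)) × Fin (a i + 1)) (scrollCone n a) := by
  have hXY : divisorCone n a F ⊆ scrollCone n a := by
    rintro v ⟨s, t, lam, hv, _⟩
    exact ⟨s, t, lam, hv⟩
  have hle : quadrics k ((i : Fin (n + 1)) × Fin (a i + 1)) (scrollCone n a) ≤
      quadrics k ((i : Fin (n + 1)) × Fin (a i + 1)) (divisorCone n a F) :=
    quadrics_antitone' hXY
  constructor
  · intro hQ
    have hle2 : quadrics k ((i : Fin (n + 1)) × Fin (a i + 1)) (divisorCone n a F) ≤
        quadrics k ((i : Fin (n + 1)) × Fin (a i + 1)) (scrollCone n a) := by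
      intro f hf
      rw [mem_quadrics_iff']
      refine ⟨fun y hy => ?_, ((mem_quadrics_iff' _ f).mp hf).2⟩
      rw [← hQ] at hy
      exact hy f hf
    rw [a2, a2, le_antisymm hle2 hle]
  · intro ha
    have heq : quadrics k ((i : Fin (n + 1)) × Fin (a i + 1)) (scrollCone n a) =
        quadrics k ((i : Fin (n + 1)) × Fin (a i + 1)) (divisorCone n a F) :=
      Submodule.eq_of_le_of_finrank_eq hle (by rw [a2] at ha; exact ha.symm)
    rw [← quadZero_scroll' n a]
    unfold quadZero
    rw [heq]
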